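/- Any two transition kernels in the model-based uncertainty set induce Bellman values that are uniformly close: if P̃₁, P̃₂ ∈ G, then for every h ∈ {1,…,H} and state s, |Ṽ^{P̃₁}_h(s) − Ṽ^{P̃₂}_h(s)| ≤ (β_max − α_min)·(H−h)(H−h+1)/2; in particular |Ṽ^{P̃₁}_1(s) − Ṽ^{P̃₂}_1(s)| ≤ (β_max − α_min)·H(H−1)/2. Since the true marginalized kernel P lies in G, the value estimate Ṽ_1(s) := inf_{P̃∈G} Ṽ^{P̃}_1(s) satisfies |V_1(s) − Ṽ_1(s)| ≤ (β_max − α_min)·H(H−1)/2. -/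

import Mathlib

open Finset

noncomputable section

variable {S U A : Type*}

/-- Marginalized (observed) behavior policy `π_b(a|s) = Σ_u P(u|s) π_b(a|s,u)`. -/
def piMarg [Fintype U] (Pu : S → U → ℝ) (pib : S → U → A → ℝ) (s : S) (a : A) : ℝ :=
  ∑ u, Pu s u * pib s u a

/-- Marginalized transition kernel `P(s'|s,a) = Σ_u P(u|s) T(s'|s,u,a)`. -/
def margKer [Fintype U] (Pu : S → U → ℝ) (T : S → U → A → S → ℝ)
    (s : S) (a : A) (s' : S) : ℝ :=
  ∑ u, Pu s u * T s u a s'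

/-- Confounded observed kernel `P^b(s'|s,a) = Σ_u P(u|s)·(π_b(a|s,u)/π_b(a|s))·T(s'|s,u,a)`. -/
def confKer [Fintype U] (Pu : S → U → ℝ) (pib : S → U → A → ℝ) (T : S → U → A → S → ℝ)
    (s : S) (a : A) (s' : S) : ℝ :=
  ∑ u, Pu s u * (pib s u a / piMarg Pu pib s a) * T s u a s'

/-- Bellman value of the evaluation policy under kernel `P`, indexed by the number of
remaining steps: `Vaux P r πe k = V_{H+1-k}` (so `Vaux _ _ _ 0 = V_{H+1} = 0`). -/
def Vaux [Fintype S] [Fintype A] (P : S → A → S → ℝ) (r : S → A → ℝ) (pie : S → A → ℝ) :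
    ℕ → S → ℝ
  | 0 => fun _ => 0
  | (k + 1) => fun s => ∑ a, pie s a * (r s a + ∑ s', P s a s' * Vaux P r pie k s')

/-- Bellman Q-value with `k` remaining steps *after* the current one:
`Qaux P r πe k = Q_{H-k}`, i.e. `Q_h(s,a) = r(s,a) + Σ_{s'} P(s'|s,a) V_{h+1}(s')`. -/
def Qaux [Fintype S] [Fintype A] (P : S → A → S → ℝ) (r : S → A → ℝ) (pie : S → A → ℝ)
    (k : ℕ) (s : S) (a : A) : ℝ :=
  r s a + ∑ s', P s a s' * Vaux P r pie k s'

/-- Infinite-data FQE iterates indexed by remaining steps: `fqeAux Pb r πe k = f̂_{H+1-k}`,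
so `f̂_{H+1} = 0` and `f̂_h(s,a) = r(s,a) + Σ_{s'} P^b(s'|s,a) Σ_{a'} π_e(a'|s') f̂_{h+1}(s',a')`. -/
def fqeAux [Fintype S] [Fintype A] (Pb : S → A → S → ℝ) (r : S → A → ℝ) (pie : S → A → ℝ) :
    ℕ → S → A → ℝ
  | 0 => fun _ _ => 0
  | (k + 1) => fun s a => r s a + ∑ s', Pb s a s' * ∑ a', pie s' a' * fqeAux Pb r pie k s' a'

/-- Model-based uncertainty set `G`: kernels `P̃` with nonnegative rows summing to one and
`α(s,a)·P^b(s'|s,a) ≤ P̃(s'|s,a) ≤ β(s,a)·P^b(s'|s,a)` for all `s, a, s'`. -/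
def Gset [Fintype S] [Fintype U] [Fintype A] (Pu : S → U → ℝ) (pib : S → U → A → ℝ)
    (T : S → U → A → S → ℝ) (α β : S → A → ℝ) : Set (S → A → S → ℝ) :=
  {Pt | ∀ s a, (∀ s', 0 ≤ Pt s a s') ∧ (∑ s', Pt s a s' = 1) ∧
    ∀ s', α s a * confKer Pu pib T s a s' ≤ Pt s a s' ∧
      Pt s a s' ≤ β s a * confKer Pu pib T s a s'}

/-!
If `P₁, P₂ ∈ G`, both rows `P₁(·|s,a)` and `P₂(·|s,a)` lie in the band
`[α(s,a) P^b(·|s,a), β(s,a) P^b(·|s,a)]` around a probability vector, so they are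
`(β_max − α_min)`-close in `ℓ¹`. The value difference with `k` steps to go satisfies
`V¹_{k+1} − V²_{k+1} = π_e [P₁ (V¹_k − V²_k) + (P₁ − P₂) V²_k]`, and `|V²_k| ≤ k`, so each step
adds at most `(β_max − α_min) k`; summing gives `(β_max − α_min) k (k − 1) / 2`.
The sensitivity bounds say exactly that the true marginalized kernel lies in `G`, and a value
within `C` of every element of a set of reals is within `C` of its infimum.
-/

theorem abs_sum_mul_le_sum_abs_mul {ι : Type*} [Fintype ι] (g f : ι → ℝ) {c : ℝ}
    (hf : ∀ i, |f i| ≤ c) : |∑ i, g i * f i| ≤ (∑ i, |g i|) * c :=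
  calc |∑ i, g i * f i| ≤ ∑ i, |g i| * |f i| := by
        simpa only [abs_mul] using abs_sum_le_sum_abs (fun i => g i * f i) univ
    _ ≤ ∑ i, |g i| * c := by gcongr with i; exact hf i
    _ = (∑ i, |g i|) * c := (sum_mul _ _ _).symm

theorem abs_sum_mul_le_of_abs_le {ι : Type*} [Fintype ι] {w f : ι → ℝ} {c : ℝ}
    (hw0 : ∀ i, 0 ≤ w i) (hw1 : ∑ i, w i = 1) (hf : ∀ i, |f i| ≤ c) :
    |∑ i, w i * f i| ≤ c := by
  simpa only [abs_of_nonneg (hw0 _), hw1, one_mul] using abs_sum_mul_le_sum_abs_mul w f hf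

theorem abs_sub_csInf_le_of_forall_abs_sub_le {s : Set ℝ} {x C : ℝ} (hx : x ∈ s)
    (h : ∀ y ∈ s, |x - y| ≤ C) : |x - sInf s| ≤ C := by
  have hlow : ∀ y ∈ s, x - C ≤ y := fun y hy => by linarith [(abs_sub_le_iff.1 (h y hy)).1]
  have hle : sInf s ≤ x := csInf_le ⟨x - C, hlow⟩ hx
  have hge : x - C ≤ sInf s := le_csInf ⟨x, hx⟩ hlow
  rw [abs_of_nonneg (sub_nonneg.2 hle)]
  linarith

section Bellman

variable [Fintype S] [Fintype A] {r pie : S → A → ℝ}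

theorem Vaux_succ (P : S → A → S → ℝ) (k : ℕ) (s : S) :
    Vaux P r pie (k + 1) s = ∑ a, pie s a * Qaux P r pie k s a :=
  rfl

theorem Qaux_sub_Qaux (P₁ P₂ : S → A → S → ℝ) (k : ℕ) (s : S) (a : A) :
    Qaux P₁ r pie k s a - Qaux P₂ r pie k s a =
      ∑ s', P₁ s a s' * (Vaux P₁ r pie k s' - Vaux P₂ r pie k s') +
        ∑ s', (P₁ s a s' - P₂ s a s') * Vaux P₂ r pie k s' := by
  simp only [Qaux, mul_sub, sub_mul, sum_sub_distrib]
  ring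

theorem abs_Vaux_le {P : S → A → S → ℝ} (hP0 : ∀ s a s', 0 ≤ P s a s')
    (hP1 : ∀ s a, ∑ s', P s a s' = 1) (hr : ∀ s a, |r s a| ≤ 1)
    (hpie0 : ∀ s a, 0 ≤ pie s a) (hpie1 : ∀ s, ∑ a, pie s a = 1) :
    ∀ k s, |Vaux P r pie k s| ≤ k := by
  intro k
  induction k with
  | zero => simp [Vaux]
  | succ k ih =>
    intro s
    rw [Vaux_succ]
    refine abs_sum_mul_le_of_abs_le (hpie0 s) (hpie1 s) fun a => ?_
    calc |Qaux P r pie k s a| ≤ |r s a| + |∑ s', P s a s' * Vaux P r pie k s'| :=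
          abs_add_le _ _
      _ ≤ 1 + k := add_le_add (hr s a) (abs_sum_mul_le_of_abs_le (hP0 s a) (hP1 s a) ih)
      _ = (k + 1 : ℕ) := by push_cast; ring

theorem abs_Vaux_sub_le {P₁ P₂ : S → A → S → ℝ} {δ : ℝ}
    (hP₁0 : ∀ s a s', 0 ≤ P₁ s a s') (hP₁1 : ∀ s a, ∑ s', P₁ s a s' = 1)
    (hP₂0 : ∀ s a s', 0 ≤ P₂ s a s') (hP₂1 : ∀ s a, ∑ s', P₂ s a s' = 1)
    (hr : ∀ s a, |r s a| ≤ 1) (hpie0 : ∀ s a, 0 ≤ pie s a) (hpie1 : ∀ s, ∑ a, pie s a = 1)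
    (hδ : ∀ s a, ∑ s', |P₁ s a s' - P₂ s a s'| ≤ δ) :
    ∀ k s, |Vaux P₁ r pie k s - Vaux P₂ r pie k s| ≤ δ * k * ((k : ℝ) - 1) / 2 := by
  intro k
  induction k with
  | zero => simp [Vaux]
  | succ k ih =>
    intro s
    have hV₂ := abs_Vaux_le hP₂0 hP₂1 hr hpie0 hpie1 k
    have hQ : ∀ a, |Qaux P₁ r pie k s a - Qaux P₂ r pie k s a| ≤
        δ * k * ((k : ℝ) - 1) / 2 + δ * k := fun a => by
      rw [Qaux_sub_Qaux]
      refine (abs_add_le _ _).trans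
        (add_le_add (abs_sum_mul_le_of_abs_le (hP₁0 s a) (hP₁1 s a) ih) ?_)
      exact (abs_sum_mul_le_sum_abs_mul _ _ hV₂).trans
        (mul_le_mul_of_nonneg_right (hδ s a) k.cast_nonneg)
    calc |Vaux P₁ r pie (k + 1) s - Vaux P₂ r pie (k + 1) s|
        = |∑ a, pie s a * (Qaux P₁ r pie k s a - Qaux P₂ r pie k s a)| := by
          simp only [Vaux_succ, mul_sub, sum_sub_distrib]
      _ ≤ δ * k * ((k : ℝ) - 1) / 2 + δ * k := abs_sum_mul_le_of_abs_le (hpie0 s) (hpie1 s) hQ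
      _ = δ * (k + 1 : ℕ) * (((k + 1 : ℕ) : ℝ) - 1) / 2 := by push_cast; ring

end Bellman

section UncertaintySet

variable [Fintype U] {Pu : S → U → ℝ} {pib : S → U → A → ℝ} {T : S → U → A → S → ℝ}

theorem piMarg_pos (hPu0 : ∀ s u, 0 ≤ Pu s u) (hPu1 : ∀ s, ∑ u, Pu s u = 1)
    (hpib0 : ∀ s u a, 0 < pib s u a) (s : S) (a : A) : 0 < piMarg Pu pib s a := by
  obtain ⟨u, -, hu⟩ := (sum_pos_iff_of_nonneg fun u _ => hPu0 s u).1 (hPu1 s ▸ one_pos)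
  exact sum_pos' (fun u _ => mul_nonneg (hPu0 s u) (hpib0 s u a).le)
    ⟨u, mem_univ u, mul_pos hu (hpib0 s u a)⟩

variable [Fintype S]

theorem sum_confKer (hPu0 : ∀ s u, 0 ≤ Pu s u) (hPu1 : ∀ s, ∑ u, Pu s u = 1)
    (hT1 : ∀ s u a, ∑ s', T s u a s' = 1) (hpib0 : ∀ s u a, 0 < pib s u a) (s : S) (a : A) :
    ∑ s', confKer Pu pib T s a s' = 1 := by
  have hm := (piMarg_pos hPu0 hPu1 hpib0 s a).ne'
  calc ∑ s', confKer Pu pib T s a s' = ∑ u, Pu s u * (pib s u a / piMarg Pu pib s a) := by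
        simp only [confKer]
        rw [sum_comm]
        simp only [← mul_sum, hT1, mul_one]
    _ = 1 := by
        simp only [← mul_div_assoc, ← sum_div]
        exact div_self hm

variable [Fintype A]

theorem sum_abs_sub_le_of_mem_Gset {α β : S → A → ℝ} {Pt₁ Pt₂ : S → A → S → ℝ}
    (h₁ : Pt₁ ∈ Gset Pu pib T α β) (h₂ : Pt₂ ∈ Gset Pu pib T α β) {s : S} {a : A}
    (hconf : ∑ s', confKer Pu pib T s a s' = 1) :
    ∑ s', |Pt₁ s a s' - Pt₂ s a s'| ≤ β s a - α s a :=
  calc ∑ s', |Pt₁ s a s' - Pt₂ s a s'| ≤ ∑ s', (β s a - α s a) * confKer Pu pib T s a s' := by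
        gcongr with s'
        obtain ⟨hl₁, hu₁⟩ := (h₁ s a).2.2 s'
        obtain ⟨hl₂, hu₂⟩ := (h₂ s a).2.2 s'
        rw [abs_sub_le_iff]
        constructor <;> linarith
    _ = β s a - α s a := by rw [← mul_sum, hconf, mul_one]

theorem margKer_mem_Gset {α β : S → A → ℝ} (hPu0 : ∀ s u, 0 ≤ Pu s u)
    (hPu1 : ∀ s, ∑ u, Pu s u = 1) (hT0 : ∀ s u a s', 0 ≤ T s u a s')
    (hT1 : ∀ s u a, ∑ s', T s u a s' = 1) (hpib0 : ∀ s u a, 0 < pib s u a)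
    (hsens : ∀ s u a, α s a ≤ piMarg Pu pib s a / pib s u a ∧
      piMarg Pu pib s a / pib s u a ≤ β s a) :
    margKer Pu T ∈ Gset Pu pib T α β := by
  intro s a
  have hm := piMarg_pos hPu0 hPu1 hpib0 s a
  have hw : ∀ u s', 0 ≤ Pu s u * T s u a s' := fun u s' => mul_nonneg (hPu0 s u) (hT0 s u a s')
  refine ⟨fun s' => sum_nonneg fun u _ => hw u s', ?_, fun s' => ⟨?_, ?_⟩⟩
  · simp only [margKer]
    rw [sum_comm]
    simp only [← mul_sum, hT1, mul_one, hPu1]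
  · simp only [confKer, margKer, mul_sum]
    refine sum_le_sum fun u _ => ?_
    have hα : α s a * (pib s u a / piMarg Pu pib s a) ≤ 1 := by
      rw [← mul_div_assoc, div_le_one hm, ← le_div_iff₀ (hpib0 s u a)]
      exact (hsens s u a).1
    calc α s a * (Pu s u * (pib s u a / piMarg Pu pib s a) * T s u a s')
        = α s a * (pib s u a / piMarg Pu pib s a) * (Pu s u * T s u a s') := by ring
      _ ≤ Pu s u * T s u a s' := mul_le_of_le_one_left (hw u s') hα
  · simp only [confKer, margKer, mul_sum]
    refine sum_le_sum fun u _ => ?_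
    have hβ : 1 ≤ β s a * (pib s u a / piMarg Pu pib s a) := by
      rw [← mul_div_assoc, one_le_div hm, ← div_le_iff₀ (hpib0 s u a)]
      exact (hsens s u a).2
    calc Pu s u * T s u a s'
        ≤ β s a * (pib s u a / piMarg Pu pib s a) * (Pu s u * T s u a s') :=
          le_mul_of_one_le_left (hw u s') hβ
      _ = β s a * (Pu s u * (pib s u a / piMarg Pu pib s a) * T s u a s') := by ring

end UncertaintySet

theorem model_based_uniform_value_closeness_general
    [Fintype S] [Fintype U] [Fintype A]
    (H : ℕ)
    (Pu : S → U → ℝ) (hPu0 : ∀ s u, 0 ≤ Pu s u) (hPu1 : ∀ s, ∑ u, Pu s u = 1)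
    (T : S → U → A → S → ℝ) (hT0 : ∀ s u a s', 0 ≤ T s u a s')
    (hT1 : ∀ s u a, ∑ s', T s u a s' = 1)
    (r : S → A → ℝ) (hr0 : ∀ s a, 0 ≤ r s a) (hr1 : ∀ s a, r s a ≤ 1)
    (pib : S → U → A → ℝ) (hpib0 : ∀ s u a, 0 < pib s u a)
    (pie : S → A → ℝ) (hpie0 : ∀ s a, 0 ≤ pie s a) (hpie1 : ∀ s, ∑ a, pie s a = 1)
    (α β : S → A → ℝ)
    (hsens : ∀ s u a, α s a ≤ piMarg Pu pib s a / pib s u a ∧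
      piMarg Pu pib s a / pib s u a ≤ β s a)
    (αmin βmax : ℝ)
    (hαmin : ∀ s a, αmin ≤ α s a) (hβmax : ∀ s a, β s a ≤ βmax) :
    (∀ Pt₁ ∈ Gset Pu pib T α β, ∀ Pt₂ ∈ Gset Pu pib T α β,
      ∀ h : ℕ, 1 ≤ h → h ≤ H → ∀ s : S,
        |Vaux Pt₁ r pie (H + 1 - h) s - Vaux Pt₂ r pie (H + 1 - h) s| ≤
          (βmax - αmin) * ((H - h : ℕ) : ℝ) * (((H - h : ℕ) : ℝ) + 1) / 2) ∧
    (∀ s : S,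
      |Vaux (margKer Pu T) r pie H s -
          sInf ((fun Pt : S → A → S → ℝ => Vaux Pt r pie H s) '' Gset Pu pib T α β)| ≤
        (βmax - αmin) * H * ((H : ℝ) - 1) / 2) := by
  have hr : ∀ s a, |r s a| ≤ 1 := fun s a => abs_le.2 ⟨by linarith [hr0 s a], hr1 s a⟩
  have hclose : ∀ Pt₁ ∈ Gset Pu pib T α β, ∀ Pt₂ ∈ Gset Pu pib T α β, ∀ k s,
      |Vaux Pt₁ r pie k s - Vaux Pt₂ r pie k s| ≤ (βmax - αmin) * k * ((k : ℝ) - 1) / 2 :=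
    fun Pt₁ h₁ Pt₂ h₂ => abs_Vaux_sub_le (fun s a => (h₁ s a).1) (fun s a => (h₁ s a).2.1)
      (fun s a => (h₂ s a).1) (fun s a => (h₂ s a).2.1) hr hpie0 hpie1 fun s a =>
        (sum_abs_sub_le_of_mem_Gset h₁ h₂ (sum_confKer hPu0 hPu1 hT1 hpib0 s a)).trans
          (by linarith [hαmin s a, hβmax s a])
  have hmarg := margKer_mem_Gset hPu0 hPu1 hT0 hT1 hpib0 hsens
  refine ⟨fun Pt₁ h₁ Pt₂ h₂ h _ hhH s => ?_, fun s => ?_⟩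
  · have hk : ((H + 1 - h : ℕ) : ℝ) = ((H - h : ℕ) : ℝ) + 1 := by
      rw [Nat.sub_add_comm hhH]
      push_cast
      ring
    have := hclose Pt₁ h₁ Pt₂ h₂ (H + 1 - h) s
    rw [hk] at this
    exact this.trans_eq (by ring)
  · exact abs_sub_csInf_le_of_forall_abs_sub_le ⟨_, hmarg, rfl⟩ <| by
      rintro _ ⟨Pt, hPt, rfl⟩
      exact hclose _ hmarg Pt hPt H s

/-- Any two kernels in the model-based uncertainty set `G` induce Bellman values within
`(β_max − α_min)·(H−h)(H−h+1)/2` of each other; since the true marginalized kernel lies in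
`G`, the model-based estimate `Ṽ_1(s) = inf_{P̃∈G} Ṽ^{P̃}_1(s)` satisfies
`|V_1(s) − Ṽ_1(s)| ≤ (β_max − α_min)·H(H−1)/2`. -/
theorem model_based_uniform_value_closeness
    [Fintype S] [Fintype U] [Fintype A] [Nonempty S] [Nonempty U] [Nonempty A]
    (H : ℕ) (hH : 1 ≤ H)
    (Pu : S → U → ℝ) (hPu0 : ∀ s u, 0 ≤ Pu s u) (hPu1 : ∀ s, ∑ u, Pu s u = 1)
    (T : S → U → A → S → ℝ) (hT0 : ∀ s u a s', 0 ≤ T s u a s')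
    (hT1 : ∀ s u a, ∑ s', T s u a s' = 1)
    (r : S → A → ℝ) (hr0 : ∀ s a, 0 ≤ r s a) (hr1 : ∀ s a, r s a ≤ 1)
    (pib : S → U → A → ℝ) (hpib0 : ∀ s u a, 0 < pib s u a)
    (hpib1 : ∀ s u, ∑ a, pib s u a = 1)
    (pie : S → A → ℝ) (hpie0 : ∀ s a, 0 ≤ pie s a) (hpie1 : ∀ s, ∑ a, pie s a = 1)
    (α β : S → A → ℝ) (hαpos : ∀ s a, 0 < α s a)
    (hsens : ∀ s u a, α s a ≤ piMarg Pu pib s a / pib s u a ∧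
      piMarg Pu pib s a / pib s u a ≤ β s a)
    (αmin βmax : ℝ) (hαmin0 : 0 < αmin)
    (hαmin : ∀ s a, αmin ≤ α s a) (hβmax : ∀ s a, β s a ≤ βmax) :
    (∀ Pt₁ ∈ Gset Pu pib T α β, ∀ Pt₂ ∈ Gset Pu pib T α β,
      ∀ h : ℕ, 1 ≤ h → h ≤ H → ∀ s : S,
        |Vaux Pt₁ r pie (H + 1 - h) s - Vaux Pt₂ r pie (H + 1 - h) s| ≤
          (βmax - αmin) * ((H - h : ℕ) : ℝ) * (((H - h : ℕ) : ℝ) + 1) / 2) ∧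
    (∀ s : S,
      |Vaux (margKer Pu T) r pie H s -
          sInf ((fun Pt : S → A → S → ℝ => Vaux Pt r pie H s) '' Gset Pu pib T α β)| ≤
        (βmax - αmin) * H * ((H : ℝ) - 1) / 2) :=
  model_based_uniform_value_closeness_general H Pu hPu0 hPu1 T hT0 hT1 r hr0 hr1 pib hpib0 pie hpie0
    hpie1 α β hsens αmin βmax hαmin hβmax
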